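/- Set θ̄_F = 1 + √2, θ̄_O = 2, θ̄_N = 2 + √5. For every ℓ̄ > 0 one has L̄_⋆(ℓ̄, 0) = ℓ̄ for each ⋆ ∈ {F, O, N}, and for each ⋆ ∈ {F, O, N}: L̄_⋆(ℓ̄, 0) < L̄_⋆(ℓ̄, 1 + ℓ̄) whenever 0 < ℓ̄ < θ̄_⋆, L̄_⋆(θ̄_⋆, 0) = L̄_⋆(θ̄_⋆, 1 + θ̄_⋆), and L̄_⋆(ℓ̄, 0) > L̄_⋆(ℓ̄, 1 + ℓ̄) whenever ℓ̄ > θ̄_⋆. Moreover the corresponding optimal thresholds are λ̄(θ̄_F) = 2 + √2, λ̄(θ̄_O) = 3, and λ̄(θ̄_N) = 3 + √5. -/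

import Mathlib

/-- The 2×2 pivot matrix M(ℓ,ϑ,c,s) = A − B with A = diag(ℓ,0), B = ϑ·[[c²,cs],[cs,s²]]. -/
noncomputable def pivotM (l θ c s : ℝ) : Matrix (Fin 2) (Fin 2) ℝ :=
  !![l - θ * c ^ 2, -(θ * c * s); -(θ * c * s), -(θ * s ^ 2)]

/-- Frobenius norm: square root of the sum of squares of the entries. -/
noncomputable def frobNorm (A : Matrix (Fin 2) (Fin 2) ℝ) : ℝ :=
  Real.sqrt (∑ i, ∑ j, (A i j) ^ 2)

/-- Operator norm: the ℓ²→ℓ² operator norm, i.e. the largest singular value. -/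
noncomputable def opNorm (A : Matrix (Fin 2) (Fin 2) ℝ) : ℝ :=
  ‖LinearMap.toContinuousLinearMap (Matrix.toEuclideanLin A)‖

/-- Nuclear norm: the trace of √(AᴴA), i.e. the sum of the singular values. -/
noncomputable def nucNorm (A : Matrix (Fin 2) (Fin 2) ℝ) : ℝ :=
  ((Matrix.isHermitian_conjTranspose_mul_self A).eigenvectorUnitary.1 *
    Matrix.diagonal (fun i => Real.sqrt ((Matrix.isHermitian_conjTranspose_mul_self A).eigenvalues i)) *
    (star (Matrix.isHermitian_conjTranspose_mul_self A).eigenvectorUnitary : Matrix (Fin 2) (Fin 2) ℝ)).trace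

/-- Limiting cosine c̄(ℓ̄) in the γ → ∞ disproportional framework. -/
noncomputable def cBar (l : ℝ) : ℝ := Real.sqrt (l / (1 + l))

/-- Limiting sine s̄(ℓ̄) = √(1/(1+ℓ̄)). -/
noncomputable def sBar (l : ℝ) : ℝ := Real.sqrt (1 / (1 + l))

/-- Asymptotic Frobenius loss L̄_F(ℓ̄, ϑ). -/
noncomputable def lossBarF (l θ : ℝ) : ℝ := frobNorm (pivotM l θ (cBar l) (sBar l))

/-- Asymptotic operator-norm loss L̄_O(ℓ̄, ϑ). -/
noncomputable def lossBarO (l θ : ℝ) : ℝ := opNorm (pivotM l θ (cBar l) (sBar l))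

/-- Asymptotic nuclear-norm loss L̄_N(ℓ̄, ϑ). -/
noncomputable def lossBarN (l θ : ℝ) : ℝ := nucNorm (pivotM l θ (cBar l) (sBar l))

/- ### Auxiliary lemmas -/

lemma opNorm_eq_of (A : Matrix (Fin 2) (Fin 2) ℝ) (t v0 v1 : ℝ) (ht : 0 ≤ t)
    (hub : ∀ a b : ℝ, (A 0 0 * a + A 0 1 * b) ^ 2 + (A 1 0 * a + A 1 1 * b) ^ 2
      ≤ t ^ 2 * (a ^ 2 + b ^ 2))
    (hv : 0 < v0 ^ 2 + v1 ^ 2)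
    (hlb : (A 0 0 * v0 + A 0 1 * v1) ^ 2 + (A 1 0 * v0 + A 1 1 * v1) ^ 2
      = t ^ 2 * (v0 ^ 2 + v1 ^ 2)) :
    opNorm A = t := by
  have happ : ∀ (y : EuclideanSpace ℝ (Fin 2)) (i : Fin 2),
      (Matrix.toEuclideanLin A y) i = A i 0 * y 0 + A i 1 * y 1 := by
    intro y i
    fin_cases i <;> simp [Matrix.toEuclideanLin_apply, Matrix.mulVec, dotProduct, Fin.sum_univ_two]
  have hnorm : ∀ y : EuclideanSpace ℝ (Fin 2), ‖Matrix.toEuclideanLin A y‖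
      = Real.sqrt ((A 0 0 * y 0 + A 0 1 * y 1) ^ 2 + (A 1 0 * y 0 + A 1 1 * y 1) ^ 2) := by
    intro y
    rw [EuclideanSpace.norm_eq]
    simp [Fin.sum_univ_two, happ, sq_abs]
  have hynorm : ∀ y : EuclideanSpace ℝ (Fin 2),
      ‖y‖ = Real.sqrt ((y 0) ^ 2 + (y 1) ^ 2) := by
    intro y
    rw [EuclideanSpace.norm_eq]
    simp [Fin.sum_univ_two, sq_abs]
  apply le_antisymm
  · apply ContinuousLinearMap.opNorm_le_bound _ ht
    intro x
    rw [LinearMap.coe_toContinuousLinearMap'] at *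
    rw [hnorm, hynorm]
    rw [← Real.sqrt_sq ht, ← Real.sqrt_mul (sq_nonneg t)]
    exact Real.sqrt_le_sqrt (hub _ _)
  · set y : EuclideanSpace ℝ (Fin 2) := (WithLp.equiv 2 (Fin 2 → ℝ)).symm ![v0, v1] with hy
    have hy0 : y 0 = v0 := rfl
    have hy1 : y 1 = v1 := rfl
    have h1 : ‖Matrix.toEuclideanLin A y‖ = t * ‖y‖ := by
      rw [hnorm, hynorm, hy0, hy1, hlb, Real.sqrt_mul (sq_nonneg t), Real.sqrt_sq ht]
    have h2 : ‖Matrix.toEuclideanLin A y‖ ≤ opNorm A * ‖y‖ :=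
      (LinearMap.toContinuousLinearMap (Matrix.toEuclideanLin A)).le_opNorm y
    rw [h1] at h2
    have hypos : 0 < ‖y‖ := by
      rw [hynorm, hy0, hy1]
      exact Real.sqrt_pos.mpr hv
    exact le_of_mul_le_mul_right h2 hypos

lemma posSemidef_fin2 (a b d : ℝ)
    (h : ∀ x y : ℝ, 0 ≤ a * x ^ 2 + 2 * b * x * y + d * y ^ 2) :
    (!![a, b; b, d]).PosSemidef := by
  rw [Matrix.posSemidef_iff_dotProduct_mulVec]
  constructor
  · ext i j
    fin_cases i <;> fin_cases j <;>
      simp [Matrix.conjTranspose, Matrix.vecHead, Matrix.vecTail]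
  · intro x
    have := h (x 0) (x 1)
    simp only [dotProduct, Matrix.mulVec, Fin.sum_univ_two, Pi.star_apply, star_trivial]
    simp [dotProduct, Fin.sum_univ_two]
    nlinarith [h (x 0) (x 1)]

section
open scoped MatrixOrder
lemma nucNorm_eq_of (A S : Matrix (Fin 2) (Fin 2) ℝ) (hS : S.PosSemidef)
    (h : S ^ 2 = A.conjTranspose * A) : nucNorm A = S.trace := by
  have hAA := Matrix.posSemidef_conjTranspose_mul_self A
  have key : CFC.sqrt (A.conjTranspose * A) = S :=
    (CFC.sqrt_eq_iff _ _ hAA.nonneg hS.nonneg).mpr (by rw [← h, sq])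
  rw [← key, CFC.sqrt_eq_real_sqrt _ hAA.nonneg, cfcₙ_eq_cfc, hAA.1.cfc_eq]
  simp [nucNorm, Matrix.IsHermitian.cfc, Unitary.conjStarAlgAut_apply, Function.comp_def]
end


lemma pivot_zero (l c s : ℝ) : pivotM l 0 c s = !![l, 0; 0, 0] := by
  ext i j
  fin_cases i <;> fin_cases j <;> simp [pivotM]

lemma pivot_full (l : ℝ) (hl : 0 < l) :
    pivotM l (1 + l) (cBar l) (sBar l) = !![0, -Real.sqrt l; -Real.sqrt l, -1] := by
  have h1 : (0 : ℝ) < 1 + l := by linarith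
  have hc2 : cBar l ^ 2 = l / (1 + l) := Real.sq_sqrt (div_nonneg hl.le h1.le)
  have hs2 : sBar l ^ 2 = 1 / (1 + l) := Real.sq_sqrt (by positivity)
  have hcs : cBar l * sBar l = Real.sqrt l / (1 + l) := by
    rw [cBar, sBar, ← Real.sqrt_mul (div_nonneg hl.le h1.le), div_mul_div_comm, mul_one,
      ← pow_two, Real.sqrt_div hl.le, Real.sqrt_sq h1.le]
  have e1 : l - (1 + l) * cBar l ^ 2 = 0 := by
    rw [hc2, mul_comm, div_mul_cancel₀ _ h1.ne', sub_self]
  have e2 : (1 + l) * cBar l * sBar l = Real.sqrt l := by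
    rw [mul_assoc, hcs, mul_comm, div_mul_cancel₀ _ h1.ne']
  have e3 : (1 + l) * sBar l ^ 2 = 1 := by
    rw [hs2, mul_one_div, div_self h1.ne']
  ext i j
  fin_cases i <;> fin_cases j <;>
    simp [pivotM, e1, e2, e3]

lemma frob_zero (l : ℝ) (hl : 0 ≤ l) : frobNorm !![l, 0; 0, 0] = l := by
  rw [frobNorm]
  have h : (∑ i, ∑ j, ((!![l, 0; 0, 0] : Matrix (Fin 2) (Fin 2) ℝ) i j) ^ 2) = l ^ 2 := by
    simp [Fin.sum_univ_two]
  rw [h, Real.sqrt_sq hl]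

lemma op_zero (l : ℝ) (hl : 0 ≤ l) : opNorm !![l, 0; 0, 0] = l := by
  apply opNorm_eq_of _ l 1 0 hl
  · intro a b
    show (l * a + 0 * b) ^ 2 + (0 * a + 0 * b) ^ 2 ≤ l ^ 2 * (a ^ 2 + b ^ 2)
    nlinarith [sq_nonneg (l * b), sq_nonneg l, sq_nonneg b]
  · norm_num
  · show (l * 1 + 0 * 0) ^ 2 + (0 * 1 + 0 * 0) ^ 2 = l ^ 2 * (1 ^ 2 + 0 ^ 2)
    ring

lemma nuc_zero (l : ℝ) (hl : 0 ≤ l) : nucNorm !![l, 0; 0, 0] = l := by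
  have hps : (!![l, 0; 0, 0] : Matrix (Fin 2) (Fin 2) ℝ).PosSemidef := by
    apply posSemidef_fin2
    intro x y
    nlinarith [sq_nonneg x, sq_nonneg y, mul_nonneg hl (sq_nonneg x)]
  have hsq : (!![l, 0; 0, 0] : Matrix (Fin 2) (Fin 2) ℝ) ^ 2
      = (!![l, 0; 0, 0] : Matrix (Fin 2) (Fin 2) ℝ).conjTranspose * !![l, 0; 0, 0] := by
    rw [pow_two]
    ext i j
    fin_cases i <;> fin_cases j <;>
      simp [Matrix.mul_apply, Matrix.conjTranspose_apply, Fin.sum_univ_two,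
        Matrix.vecHead, Matrix.vecTail]
  rw [nucNorm_eq_of _ !![l, 0; 0, 0] hps hsq, Matrix.trace_fin_two_of, add_zero]

lemma frob_full (l : ℝ) (hl : 0 < l) :
    frobNorm !![0, -Real.sqrt l; -Real.sqrt l, -1] = Real.sqrt (2 * l + 1) := by
  rw [frobNorm]
  have h : (∑ i, ∑ j,
      ((!![0, -Real.sqrt l; -Real.sqrt l, -1] : Matrix (Fin 2) (Fin 2) ℝ) i j) ^ 2)
      = 2 * l + 1 := by
    simp [Fin.sum_univ_two]
    rw [Real.sq_sqrt hl.le]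
    ring
  rw [h]

lemma op_full (l : ℝ) (hl : 0 < l) :
    opNorm !![0, -Real.sqrt l; -Real.sqrt l, -1]
      = (1 + Real.sqrt (4 * l + 1)) / 2 := by
  set q := Real.sqrt l with hq
  set r := Real.sqrt (4 * l + 1) with hr
  have hq2 : q ^ 2 = l := Real.sq_sqrt hl.le
  have hr2 : r ^ 2 = 4 * l + 1 := Real.sq_sqrt (by linarith)
  have hr0 : 0 ≤ r := Real.sqrt_nonneg _
  have hr1 : 1 ≤ r := by nlinarith [hr2, hr0, hl]
  set t := (1 + r) / 2 with htdef
  have ht1 : 1 ≤ t := by rw [htdef]; linarith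
  have ht0 : 0 ≤ t := by linarith
  have ht2 : t ^ 2 = t + l := by rw [htdef]; nlinarith [hr2]
  apply opNorm_eq_of _ t q t ht0
  · intro a b
    show (0 * a + -q * b) ^ 2 + (-q * a + -1 * b) ^ 2 ≤ t ^ 2 * (a ^ 2 + b ^ 2)
    have key : 0 ≤ t * a ^ 2 - 2 * q * a * b + (t - 1) * b ^ 2 := by
      nlinarith [sq_nonneg (t * a - q * b), ht2, ht1, hq2]
    nlinarith [key, ht2, hq2]
  · nlinarith [ht1]
  · show (0 * q + -q * t) ^ 2 + (-q * q + -1 * t) ^ 2 = t ^ 2 * (q ^ 2 + t ^ 2)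
    nlinarith [ht2, hq2]

lemma nuc_full (l : ℝ) (hl : 0 < l) :
    nucNorm !![0, -Real.sqrt l; -Real.sqrt l, -1] = Real.sqrt (4 * l + 1) := by
  set q := Real.sqrt l with hq
  set r := Real.sqrt (4 * l + 1) with hr
  have hq2 : q ^ 2 = l := Real.sq_sqrt hl.le
  have hq0 : 0 ≤ q := Real.sqrt_nonneg l
  have hr2 : r ^ 2 = 4 * l + 1 := Real.sq_sqrt (by linarith)
  have hr0 : 0 ≤ r := Real.sqrt_nonneg _
  have hr1 : 1 ≤ r := by nlinarith [hr2, hr0, hl]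
  have hrpos : (0:ℝ) < r := by linarith
  have hps : (!![2 * l / r, q / r; q / r, (2 * l + 1) / r] :
      Matrix (Fin 2) (Fin 2) ℝ).PosSemidef := by
    apply posSemidef_fin2
    intro x y
    have h2 : 0 ≤ 2 * l * x ^ 2 + 2 * q * x * y + (2 * l + 1) * y ^ 2 := by
      nlinarith [sq_nonneg (q * x + y), sq_nonneg (q * x), sq_nonneg (q * y), hq2]
    calc (0:ℝ) ≤ (2 * l * x ^ 2 + 2 * q * x * y + (2 * l + 1) * y ^ 2) / r :=
          div_nonneg h2 hrpos.le
      _ = 2 * l / r * x ^ 2 + 2 * (q / r) * x * y + (2 * l + 1) / r * y ^ 2 := by ring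
  have hsq : (!![2 * l / r, q / r; q / r, (2 * l + 1) / r] : Matrix (Fin 2) (Fin 2) ℝ) ^ 2
      = (!![0, -q; -q, -1] : Matrix (Fin 2) (Fin 2) ℝ).conjTranspose
      * !![0, -q; -q, -1] := by
    rw [pow_two]
    ext i j
    fin_cases i <;> fin_cases j <;>
      simp [Matrix.mul_apply, Matrix.conjTranspose_apply, Fin.sum_univ_two,
        Matrix.vecHead, Matrix.vecTail] <;>
      field_simp
    · linear_combination (1 - r ^ 2) * hq2 + (-l) * hr2
    · linear_combination (-q) * hr2
    · linear_combination (-q) * hr2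
    · linear_combination (1 - r ^ 2) * hq2 + (-(1 + l)) * hr2
  rw [nucNorm_eq_of _ _ hps hsq, Matrix.trace_fin_two_of]
  field_simp
  linear_combination -hr2

/-! ### loss values -/

lemma lossF_zero (l : ℝ) (hl : 0 < l) : lossBarF l 0 = l := by
  rw [lossBarF, pivot_zero, frob_zero l hl.le]

lemma lossO_zero (l : ℝ) (hl : 0 < l) : lossBarO l 0 = l := by
  rw [lossBarO, pivot_zero, op_zero l hl.le]

lemma lossN_zero (l : ℝ) (hl : 0 < l) : lossBarN l 0 = l := by
  rw [lossBarN, pivot_zero, nuc_zero l hl.le]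

lemma lossF_full (l : ℝ) (hl : 0 < l) : lossBarF l (1 + l) = Real.sqrt (2 * l + 1) := by
  rw [lossBarF, pivot_full l hl, frob_full l hl]

lemma lossO_full (l : ℝ) (hl : 0 < l) :
    lossBarO l (1 + l) = (1 + Real.sqrt (4 * l + 1)) / 2 := by
  rw [lossBarO, pivot_full l hl, op_full l hl]

lemma lossN_full (l : ℝ) (hl : 0 < l) : lossBarN l (1 + l) = Real.sqrt (4 * l + 1) := by
  rw [lossBarN, pivot_full l hl, nuc_full l hl]

theorem optimal_hard_thresholds_bar :
    (∀ l : ℝ, 0 < l → lossBarF l 0 = l ∧ lossBarO l 0 = l ∧ lossBarN l 0 = l) ∧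
    -- Frobenius: crossing at θ̄_F = 1 + √2
    (∀ l : ℝ, 0 < l → l < 1 + Real.sqrt 2 → lossBarF l 0 < lossBarF l (1 + l)) ∧
    lossBarF (1 + Real.sqrt 2) 0 = lossBarF (1 + Real.sqrt 2) (1 + (1 + Real.sqrt 2)) ∧
    (∀ l : ℝ, 1 + Real.sqrt 2 < l → lossBarF l (1 + l) < lossBarF l 0) ∧
    -- Operator: crossing at θ̄_O = 2
    (∀ l : ℝ, 0 < l → l < 2 → lossBarO l 0 < lossBarO l (1 + l)) ∧
    lossBarO 2 0 = lossBarO 2 (1 + 2) ∧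
    (∀ l : ℝ, 2 < l → lossBarO l (1 + l) < lossBarO l 0) ∧
    -- Nuclear: crossing at θ̄_N = 2 + √5
    (∀ l : ℝ, 0 < l → l < 2 + Real.sqrt 5 → lossBarN l 0 < lossBarN l (1 + l)) ∧
    lossBarN (2 + Real.sqrt 5) 0 = lossBarN (2 + Real.sqrt 5) (1 + (2 + Real.sqrt 5)) ∧
    (∀ l : ℝ, 2 + Real.sqrt 5 < l → lossBarN l (1 + l) < lossBarN l 0) ∧
    -- optimal thresholds λ̄(θ̄) = 1 + θ̄
    (1 : ℝ) + (1 + Real.sqrt 2) = 2 + Real.sqrt 2 ∧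
    (1 : ℝ) + 2 = 3 ∧
    (1 : ℝ) + (2 + Real.sqrt 5) = 3 + Real.sqrt 5 := by
  have s2 : Real.sqrt 2 ^ 2 = 2 := Real.sq_sqrt (by norm_num)
  have s2p : 0 ≤ Real.sqrt 2 := Real.sqrt_nonneg 2
  have s2g : 1 ≤ Real.sqrt 2 := by nlinarith [s2, s2p]
  have s5 : Real.sqrt 5 ^ 2 = 5 := Real.sq_sqrt (by norm_num)
  have s5p : 0 ≤ Real.sqrt 5 := Real.sqrt_nonneg 5
  have s5g : 2 ≤ Real.sqrt 5 := by nlinarith [s5, s5p]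
  refine ⟨fun l hl => ⟨lossF_zero l hl, lossO_zero l hl, lossN_zero l hl⟩,
    ?_, ?_, ?_, ?_, ?_, ?_, ?_, ?_, ?_, by ring, by norm_num, by ring⟩
  · -- Frobenius, below threshold
    intro l hl hlt
    rw [lossF_zero l hl, lossF_full l hl]
    rw [Real.lt_sqrt hl.le]
    nlinarith [s2, s2p, hlt, hl]
  · -- Frobenius, at threshold
    have hl : (0:ℝ) < 1 + Real.sqrt 2 := by linarith
    rw [lossF_zero _ hl, lossF_full _ hl]
    rw [show 2 * (1 + Real.sqrt 2) + 1 = (1 + Real.sqrt 2) ^ 2 by nlinarith [s2]]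
    rw [Real.sqrt_sq hl.le]
  · -- Frobenius, above threshold
    intro l hlt
    have hl : 0 < l := by linarith
    rw [lossF_zero l hl, lossF_full l hl]
    rw [Real.sqrt_lt' hl]
    nlinarith [s2, s2p, hlt]
  · -- Operator, below threshold
    intro l hl hlt
    rw [lossO_zero l hl, lossO_full l hl]
    have hr0 : 0 ≤ Real.sqrt (4 * l + 1) := Real.sqrt_nonneg _
    rcases le_or_gt l (1/2) with h | h
    · have : 1 < Real.sqrt (4 * l + 1) := by
        nlinarith [Real.sq_sqrt (show (0:ℝ) ≤ 4 * l + 1 by linarith),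
          Real.sqrt_nonneg (4 * l + 1), hl]
      linarith
    · have h21 : (0:ℝ) ≤ 2 * l - 1 := by linarith
      have : 2 * l - 1 < Real.sqrt (4 * l + 1) := by
        rw [Real.lt_sqrt h21]
        nlinarith [hlt, h]
      linarith
  · -- Operator, at threshold
    have hl : (0:ℝ) < 2 := by norm_num
    rw [lossO_zero 2 hl, show (1:ℝ) + 2 = 1 + (2:ℝ) by norm_num, lossO_full 2 hl]
    rw [show (4:ℝ) * 2 + 1 = 3 ^ 2 by norm_num, Real.sqrt_sq (by norm_num : (0:ℝ) ≤ 3)]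
    norm_num
  · -- Operator, above threshold
    intro l hlt
    have hl : 0 < l := by linarith
    rw [lossO_zero l hl, lossO_full l hl]
    have : Real.sqrt (4 * l + 1) < 2 * l - 1 := by
      rw [Real.sqrt_lt' (by linarith)]
      nlinarith [hlt]
    linarith
  · -- Nuclear, below threshold
    intro l hl hlt
    rw [lossN_zero l hl, lossN_full l hl]
    rw [Real.lt_sqrt hl.le]
    nlinarith [s5, s5p, hlt, hl]
  · -- Nuclear, at threshold
    have hl : (0:ℝ) < 2 + Real.sqrt 5 := by linarith
    rw [lossN_zero _ hl, lossN_full _ hl]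
    rw [show 4 * (2 + Real.sqrt 5) + 1 = (2 + Real.sqrt 5) ^ 2 by nlinarith [s5]]
    rw [Real.sqrt_sq hl.le]
  · -- Nuclear, above threshold
    intro l hlt
    have hl : 0 < l := by linarith
    rw [lossN_zero l hl, lossN_full l hl]
    rw [Real.sqrt_lt' hl]
    nlinarith [s5, s5p, hlt]
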